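/- Suppose J′ ⊆ ℤ/fℤ and, for each μ ∈ M̃, a subset J^μ ⊆ ℤ/fℤ are given such that Σ(s(b′,J′)) ≡ Σ(s(b^μ,J^μ)) (mod p^f − 1) and Σ(t(b′,J′)) ≡ Σ(t(b^μ,J^μ)) (mod p^f − 1) for every μ ∈ M̃. Then there exists J ⊆ ℤ/fℤ such that i ∈ J ⟺ i ∈ J′ for all i ∉ J₀, and Σ(s(b,J)) ≡ Σ(s(b′,J′)) (mod p^f − 1) and Σ(t(b,J)) ≡ Σ(t(b′,J′)) (mod p^f − 1). -/
import Mathlib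


open scoped Classical
noncomputable section

/-- `Σ(v) = Σ_{i=0}^{f−1} v_i · p^{f−1−i}`. -/
def Sig (p f : ℕ) (v : ZMod f → ℤ) : ℤ :=
  ∑ i ∈ Finset.range f, v (i : ZMod f) * (p : ℤ) ^ (f - 1 - i)

/-- `A_i(c,d) = Σ_{j=1}^{f} p^{f−j} · (c_{i+j} − d_{i+j})`. -/
def Ai (p f : ℕ) (c d : ZMod f → ℤ) (i : ZMod f) : ℤ :=
  ∑ j ∈ Finset.Icc 1 f, (p : ℤ) ^ (f - j) * (c (i + (j : ZMod f)) - d (i + (j : ZMod f)))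

/-- `T_ν`: the maximal run of indices with `k`-value 1 following `ν`. -/
def Trun (f : ℕ) (k : ZMod f → ℤ) (ν : ZMod f) : Set (ZMod f) :=
  {i | ∃ s : ℕ, 1 ≤ s ∧ i = ν + (s : ZMod f) ∧
        ∀ j : ℕ, 1 ≤ j → j ≤ s → k (ν + (j : ZMod f)) = 1}

/-- `b_{i,1} = k_i − 1`. -/
def b1 (f : ℕ) (k : ZMod f → ℤ) : ZMod f → ℤ := fun i => k i - 1

/-- the constantly zero second component. -/
def zero2 (f : ℕ) : ZMod f → ℤ := fun _ => 0

/-- `b′_{i,1}`. -/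
def bp1 (p f : ℕ) (k : ZMod f → ℤ) : ZMod f → ℤ := fun i =>
  if k i = 1 then (if k (i + 1) = 1 then (p : ℤ) - 1 else (p : ℤ))
  else (if k (i + 1) = 1 then k i - 2 else k i - 1)

/-- `b^μ_{i,1}`. -/
def bmu1 (p f : ℕ) (k : ZMod f → ℤ) (μ : ZMod f) : ZMod f → ℤ := fun i =>
  if i = μ then k μ - 1 else bp1 p f k i

/-- `b^μ_{i,2}`. -/
def bmu2 (f : ℕ) (μ : ZMod f) : ZMod f → ℤ := fun i => if i = μ then -1 else 0

/-- `b^Θ_{i,1}`. -/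
def bth1 (p f : ℕ) (k : ZMod f → ℤ) : ZMod f → ℤ := fun i =>
  if k i = 1 then (if k (i + 1) = 1 then (p : ℤ) - 1 else (p : ℤ)) else k i - 1

/-- `b^Θ_{i,2}`. -/
def bth2 (f : ℕ) (k : ZMod f → ℤ) : ZMod f → ℤ := fun i =>
  if k i ≠ 1 ∧ k (i + 1) = 1 then -1 else 0

/-- `s_i(c,S) = c_{i,1}` if `i ∈ S`, else `c_{i,2}`. -/
def sW (f : ℕ) (c1 c2 : ZMod f → ℤ) (S : Set (ZMod f)) : ZMod f → ℤ :=
  fun i => if i ∈ S then c1 i else c2 i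

/-- `t_i(c,S) = c_{i,2}` if `i ∈ S`, else `c_{i,1}`. -/
def tW (f : ℕ) (c1 c2 : ZMod f → ℤ) (S : Set (ZMod f)) : ZMod f → ℤ :=
  fun i => if i ∈ S then c2 i else c1 i

/-- The set `𝒫′` of Definition 3.7 of the paper. -/
def memP' (p f : ℕ) (r : ZMod f → ℤ) : Prop :=
  (∀ i, r i = 0 ∨ r i = 1 ∨ r i = (p : ℤ) - 1 ∨ r i = (p : ℤ)) ∧
  (∀ i, r i = (p : ℤ) → (r (i + 1) = 0 ∨ r (i + 1) = 1)) ∧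
  (∀ i, (r i = 1 ∨ r i = (p : ℤ) - 1) → (r (i + 1) = (p : ℤ) - 1 ∨ r (i + 1) = (p : ℤ))) ∧
  (∀ i, r i = 0 →
    ((∀ j, r j = 0) ∨
      ∃ s t : ℕ, 1 ≤ s ∧ 1 ≤ t ∧
        (∀ j : ℕ, 1 ≤ j → j ≤ s - 1 → r (i + (j : ZMod f)) = 0) ∧
        r (i + (s : ZMod f)) = 1 ∧
        (∀ j : ℕ, 1 ≤ j → j ≤ t - 1 → r (i - (j : ZMod f)) = 0) ∧
        r (i - (t : ZMod f)) = (p : ℤ)))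

/-- The exceptional case of Theorem 3.9 of the paper. -/
def Exceptional (p f : ℕ) (r : ZMod f → ℤ) (J : Set (ZMod f)) : Prop :=
  memP' p f r ∧ (∀ i, (r i = (p : ℤ) - 1 ∨ r i = (p : ℤ)) → i ∈ J) ∧
    (∀ i, r i = 1 → i ∉ J)


/- ===== auxiliary lemmas ===== -/

lemma Sig_sub (p f : ℕ) (u w : ZMod f → ℤ) :
    Sig p f (fun i => u i - w i) = Sig p f u - Sig p f w := by
  unfold Sig
  rw [← Finset.sum_sub_distrib]
  exact Finset.sum_congr rfl fun i _ => by ring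

lemma Sig_carry (p f : ℕ) (c : ZMod f → ℤ) :
    Sig p f (fun i => (p : ℤ) * c i - c (i + 1)) = c 0 * ((p : ℤ) ^ f - 1) := by
  unfold Sig
  have h : ∀ i ∈ Finset.range f,
      ((p : ℤ) * c (i : ZMod f) - c ((i : ZMod f) + 1)) * (p : ℤ) ^ (f - 1 - i)
        = (fun n : ℕ => c (n : ZMod f) * (p : ℤ) ^ (f - n)) i
          - (fun n : ℕ => c (n : ZMod f) * (p : ℤ) ^ (f - n)) (i + 1) := by
    intro i hi
    simp only [Finset.mem_range] at hi
    have h1 : f - i = (f - 1 - i) + 1 := by omega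
    have h2 : f - (i + 1) = f - 1 - i := by omega
    simp only [h1, h2]
    push_cast
    ring
  rw [Finset.sum_congr rfl h, Finset.sum_range_sub']
  simp [ZMod.natCast_self]
  ring

lemma exists_carry (p f : ℕ) (hp : 3 ≤ (p : ℤ)) (hf : 1 ≤ f) (r : ZMod f → ℤ)
    (hdvd : ((p : ℤ) ^ f - 1) ∣ Sig p f r)
    (hb : ∀ i, -(p : ℤ) ≤ r i ∧ r i ≤ p) :
    ∃ c : ZMod f → ℤ, (∀ i, -1 ≤ c i ∧ c i ≤ 1) ∧ ∀ i, r i = p * c i - c (i + 1) := by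
  haveI : NeZero f := ⟨by omega⟩
  obtain ⟨K, hK⟩ := hdvd
  set cc : ℕ → ℤ := fun n => Nat.rec K (fun m x => p * x - r m) n with hcc
  have hcs : ∀ n, cc (n + 1) = p * cc n - r (n : ZMod f) := fun n => rfl
  have hclosed : ∀ n, cc n
      = (p : ℤ) ^ n * K - ∑ i ∈ Finset.range n, r (i : ZMod f) * (p : ℤ) ^ (n - 1 - i) := by
    intro n
    induction n with
    | zero => simp [hcc]
    | succ m ih =>
      rw [hcs, ih, Finset.sum_range_succ]
      have hterm : ∀ i ∈ Finset.range m,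
          r (i : ZMod f) * (p : ℤ) ^ (m + 1 - 1 - i)
            = (p : ℤ) * (r (i : ZMod f) * (p : ℤ) ^ (m - 1 - i)) := by
        intro i hi
        simp only [Finset.mem_range] at hi
        have : m + 1 - 1 - i = (m - 1 - i) + 1 := by omega
        rw [this]; ring
      rw [Finset.sum_congr rfl hterm, ← Finset.mul_sum]
      have hps : m + 1 - 1 - m = 0 := by omega
      rw [hps]
      ring
  have hcf : cc f = cc 0 := by
    have h0 : cc 0 = K := rfl
    have hSig : ∑ i ∈ Finset.range f, r (i : ZMod f) * (p : ℤ) ^ (f - 1 - i) = Sig p f r := by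
      unfold Sig; rfl
    rw [hclosed f, h0, hSig, hK]
    ring
  set C : ZMod f → ℤ := fun i => cc i.val with hC
  have hrel : ∀ i : ZMod f, r i = p * C i - C (i + 1) := by
    intro i
    have hvlt : i.val < f := ZMod.val_lt i
    have hcast : ((i.val : ℕ) : ZMod f) = i := ZMod.natCast_rightInverse i
    by_cases hend : i.val + 1 = f
    · have h1 : (i + 1) = ((i.val + 1 : ℕ) : ZMod f) := by push_cast [hcast]; ring
      have h0 : ((i.val + 1 : ℕ) : ZMod f) = 0 := by rw [hend]; exact ZMod.natCast_self f
      have e0 : C (i + 1) = cc 0 := by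
        rw [h1, h0, hC]; simp
      have e1 : cc 0 = (p : ℤ) * cc i.val - r i := by
        have h2 := hcs i.val
        rw [hend, hcast] at h2
        rw [← hcf, h2]
      rw [e0, e1, hC]
      ring
    · have h1 : (i + 1) = ((i.val + 1 : ℕ) : ZMod f) := by push_cast [hcast]; ring
      have h2 : C (i + 1) = cc (i.val + 1) := by
        rw [h1, hC]
        simp only []
        rw [ZMod.val_cast_of_lt (by omega)]
      rw [h2, hcs, hcast, hC]
      ring
  obtain ⟨i₀, -, hmax⟩ := Finset.exists_max_image (Finset.univ : Finset (ZMod f))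
    (fun i => |C i|) Finset.univ_nonempty
  have key : |C i₀| ≤ 1 := by
    by_contra hgt
    push_neg at hgt
    have hx2 : 2 ≤ |C i₀| := by omega
    have e := hrel i₀
    have h1 : (p : ℤ) * C i₀ = C (i₀ + 1) + r i₀ := by linarith
    have h2 : |(p : ℤ) * C i₀| ≤ |C (i₀ + 1)| + |r i₀| := by
      rw [h1]; exact abs_add_le _ _
    have h3 : |(p : ℤ) * C i₀| = p * |C i₀| := by
      rw [abs_mul, abs_of_nonneg (by linarith : (0 : ℤ) ≤ p)]
    have h4 : |C (i₀ + 1)| ≤ |C i₀| := hmax _ (Finset.mem_univ _)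
    have h5 : |r i₀| ≤ p := abs_le.mpr (hb i₀)
    have h6 : (p : ℤ) * |C i₀| ≤ |C i₀| + p := by
      rw [← h3]; linarith
    have hfin : ((p : ℤ) - 1) * (|C i₀| - 2) ≥ 0 :=
      mul_nonneg (by linarith) (by linarith)
    nlinarith [hfin, h6, hp]
  refine ⟨C, fun i => abs_le.mp (le_trans (hmax i (Finset.mem_univ i)) key), hrel⟩

lemma Lmain (p f : ℕ) (k : ZMod f → ℤ) (S : Set (ZMod f))
    (hS : ∀ i, k (i + 1) = 1 → (i ∈ S ↔ i + 1 ∈ S)) :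
    ((p : ℤ) ^ f - 1) ∣ (Sig p f (sW f (bp1 p f k) (zero2 f) S)
      - Sig p f (sW f (b1 f k) (zero2 f) S)) := by
  classical
  set c : ZMod f → ℤ := fun i => if k i = 1 ∧ i ∈ S then 1 else 0 with hc
  have hpt : ∀ i, sW f (bp1 p f k) (zero2 f) S i - sW f (b1 f k) (zero2 f) S i
      = (p : ℤ) * c i - c (i + 1) := by
    intro i
    by_cases h2 : k (i + 1) = 1
    · have h4 := hS i h2
      by_cases h3 : i ∈ S
      · have h5 : (i + 1) ∈ S := h4.mp h3
        by_cases h1 : k i = 1 <;>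
          simp [sW, bp1, b1, zero2, hc, h1, h2, h3, h5] <;> ring
      · have h5 : (i + 1) ∉ S := fun hh => h3 (h4.mpr hh)
        by_cases h1 : k i = 1 <;>
          simp [sW, bp1, b1, zero2, hc, h1, h2, h3, h5]
    · by_cases h3 : i ∈ S <;> by_cases h1 : k i = 1 <;>
        simp [sW, bp1, b1, zero2, hc, h1, h2, h3] <;> ring
  have hkey : Sig p f (sW f (bp1 p f k) (zero2 f) S) - Sig p f (sW f (b1 f k) (zero2 f) S)
      = c 0 * ((p : ℤ) ^ f - 1) := by
    rw [← Sig_sub]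
    rw [show (fun i => sW f (bp1 p f k) (zero2 f) S i - sW f (b1 f k) (zero2 f) S i)
        = (fun i => (p : ℤ) * c i - c (i + 1)) from funext hpt]
    exact Sig_carry p f c
  rw [hkey]
  exact dvd_mul_left _ _

lemma block_step (p f : ℕ) (hp : 3 ≤ (p : ℤ)) (hf : 1 ≤ f) (k : ZMod f → ℤ)
    (hk : ∀ i, 1 ≤ k i ∧ k i ≤ (p : ℤ)) (h21 : ∀ i, ¬(k i = 2 ∧ k (i + 1) = 1))
    (J' S : Set (ZMod f)) (μ : ZMod f) (hμ1 : k μ ≠ 1) (hμ2 : k (μ + 1) = 1)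
    (hcong : Int.ModEq ((p : ℤ) ^ f - 1) (Sig p f (sW f (bp1 p f k) (zero2 f) J'))
        (Sig p f (sW f (bmu1 p f k μ) (bmu2 f μ) S))) :
    ∀ t : ℕ, 1 ≤ t → (∀ a : ℕ, 1 ≤ a → a ≤ t → k (μ + (a : ZMod f)) = 1) →
      (μ ∈ J' ↔ (μ + (t : ZMod f)) ∈ J') := by
  classical
  have hkμ3 : 3 ≤ k μ := by
    have h1 := (hk μ).1
    have hne2 : k μ ≠ 2 := fun h => h21 μ ⟨h, hμ2⟩
    omega
  have hkμp : k μ ≤ (p : ℤ) := (hk μ).2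
  set r : ZMod f → ℤ := fun i =>
    sW f (bp1 p f k) (zero2 f) J' i - sW f (bmu1 p f k μ) (bmu2 f μ) S i with hr
  have hdvd : ((p : ℤ) ^ f - 1) ∣ Sig p f r := by
    have hSig : Sig p f r = Sig p f (sW f (bp1 p f k) (zero2 f) J')
        - Sig p f (sW f (bmu1 p f k μ) (bmu2 f μ) S) := Sig_sub p f _ _
    rw [hSig]
    exact hcong.symm.dvd
  have hbnd : ∀ i, -(p : ℤ) ≤ r i ∧ r i ≤ p := by
    intro i
    have hki1 := (hk i).1
    have hki2 := (hk i).2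
    by_cases hiμ : i = μ
    · subst hiμ
      simp only [hr, sW, bmu1, bmu2, zero2, if_pos rfl, bp1]
      split_ifs <;> omega
    · simp only [hr, sW, bmu1, bmu2, zero2, if_neg hiμ, bp1]
      split_ifs <;> omega
  obtain ⟨c, hcb, hrc⟩ := exists_carry p f hp hf r hdvd hbnd
  have hrμ : r μ = (if μ ∈ J' then k μ - 2 else 0) - (if μ ∈ S then k μ - 1 else -1) := by
    simp [hr, sW, bmu1, bmu2, zero2, bp1, hμ1, hμ2]
  have hcμ := hcb μ
  have hcμ1 := hcb (μ + 1)
  have ecμ := hrc μ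
  rw [hrμ] at ecμ
  have h3μ : c μ = -1 ∨ c μ = 0 ∨ c μ = 1 := by omega
  have P1 : (μ ∈ J' ↔ c (μ + 1) = 1) ∧ (c (μ + 1) = 1 ∨ c (μ + 1) = -1) := by
    by_cases hJ : μ ∈ J'
    · rw [if_pos hJ] at ecμ
      by_cases hS' : μ ∈ S
      · rw [if_pos hS'] at ecμ
        have hc1 : c (μ + 1) = 1 := by rcases h3μ with h | h | h <;> rw [h] at ecμ <;> omega
        exact ⟨iff_of_true hJ hc1, Or.inl hc1⟩
      · rw [if_neg hS'] at ecμ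
        have hc1 : c (μ + 1) = 1 := by rcases h3μ with h | h | h <;> rw [h] at ecμ <;> omega
        exact ⟨iff_of_true hJ hc1, Or.inl hc1⟩
    · rw [if_neg hJ] at ecμ
      by_cases hS' : μ ∈ S
      · rw [if_pos hS'] at ecμ
        have hc1 : c (μ + 1) = -1 := by rcases h3μ with h | h | h <;> rw [h] at ecμ <;> omega
        exact ⟨iff_of_false hJ (by omega), Or.inr hc1⟩
      · rw [if_neg hS'] at ecμ
        have hc1 : c (μ + 1) = -1 := by rcases h3μ with h | h | h <;> rw [h] at ecμ <;> omega
        exact ⟨iff_of_false hJ (by omega), Or.inr hc1⟩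
  have P2 : ∀ i : ZMod f, k i = 1 → (c i = 1 ∨ c i = -1) →
      ((i ∈ J' ↔ c i = 1) ∧ (k (i + 1) = 1 → c (i + 1) = c i)) := by
    intro i hki1 hci
    have hiμ : i ≠ μ := fun h => hμ1 (h ▸ hki1)
    have eci := hrc i
    have hcip := hcb (i + 1)
    by_cases h2 : k (i + 1) = 1
    · have hri : r i = (if i ∈ J' then (p : ℤ) - 1 else 0)
          - (if i ∈ S then (p : ℤ) - 1 else 0) := by
        simp [hr, sW, bmu1, bmu2, zero2, bp1, hiμ, hki1, h2]
      rw [hri] at eci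
      by_cases hJ : i ∈ J'
      · rw [if_pos hJ] at eci
        by_cases hS' : i ∈ S
        · rw [if_pos hS'] at eci
          exfalso; rcases hci with h | h <;> rw [h] at eci <;> omega
        · rw [if_neg hS'] at eci
          have h5 : c i = 1 ∧ c (i + 1) = 1 := by
            rcases hci with h | h <;> rw [h] at eci <;> constructor <;> omega
          exact ⟨iff_of_true hJ h5.1, fun _ => by omega⟩
      · rw [if_neg hJ] at eci
        by_cases hS' : i ∈ S
        · rw [if_pos hS'] at eci
          have h5 : c i = -1 ∧ c (i + 1) = -1 := by
            rcases hci with h | h <;> rw [h] at eci <;> constructor <;> omega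
          exact ⟨iff_of_false hJ (by omega), fun _ => by omega⟩
        · rw [if_neg hS'] at eci
          exfalso; rcases hci with h | h <;> rw [h] at eci <;> omega
    · have hri : r i = (if i ∈ J' then (p : ℤ) else 0)
          - (if i ∈ S then (p : ℤ) else 0) := by
        simp [hr, sW, bmu1, bmu2, zero2, bp1, hiμ, hki1, h2]
      rw [hri] at eci
      by_cases hJ : i ∈ J'
      · rw [if_pos hJ] at eci
        by_cases hS' : i ∈ S
        · rw [if_pos hS'] at eci
          exfalso; rcases hci with h | h <;> rw [h] at eci <;> omega
        · rw [if_neg hS'] at eci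
          have h5 : c i = 1 := by rcases hci with h | h <;> rw [h] at eci <;> omega
          exact ⟨iff_of_true hJ h5, fun hh => absurd hh h2⟩
      · rw [if_neg hJ] at eci
        by_cases hS' : i ∈ S
        · rw [if_pos hS'] at eci
          have h5 : c i = -1 := by rcases hci with h | h <;> rw [h] at eci <;> omega
          exact ⟨iff_of_false hJ (by omega), fun hh => absurd hh h2⟩
        · rw [if_neg hS'] at eci
          exfalso; rcases hci with h | h <;> rw [h] at eci <;> omega
  have chain : ∀ t : ℕ, 1 ≤ t → (∀ a : ℕ, 1 ≤ a → a ≤ t → k (μ + (a : ZMod f)) = 1) →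
      c (μ + (t : ZMod f)) = c (μ + 1) ∧ ((μ + (t : ZMod f)) ∈ J' ↔ c (μ + 1) = 1) := by
    intro t
    induction t with
    | zero => intro h; exact absurd h (by omega)
    | succ n ih =>
      intro _ hall
      by_cases hn : 1 ≤ n
      · have ih' := ih hn (fun a ha1 ha2 => hall a ha1 (by omega))
        have hkn : k (μ + (n : ZMod f)) = 1 := hall n hn (by omega)
        have hcn : c (μ + (n : ZMod f)) = 1 ∨ c (μ + (n : ZMod f)) = -1 := by
          rw [ih'.1]; exact P1.2
        have hcast : (((n + 1) : ℕ) : ZMod f) = (n : ZMod f) + 1 := by push_cast; ring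
        have hkn1 : k (μ + (n : ZMod f) + 1) = 1 := by
          have hh := hall (n + 1) (by omega) le_rfl
          rwa [hcast, ← add_assoc] at hh
        have hstep : c (μ + (n : ZMod f) + 1) = c (μ + (n : ZMod f)) :=
          (P2 _ hkn hcn).2 hkn1
        constructor
        · rw [hcast, ← add_assoc, hstep, ih'.1]
        · have hcn1 : c (μ + (n : ZMod f) + 1) = 1 ∨ c (μ + (n : ZMod f) + 1) = -1 := by
            rw [hstep, ih'.1]; exact P1.2
          have hiff := (P2 (μ + (n : ZMod f) + 1) hkn1 hcn1).1
          rw [hcast, ← add_assoc, hiff, hstep, ih'.1]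
      · have hn0 : n = 0 := by omega
        subst hn0
        have hk1 : k (μ + 1) = 1 := by
          have hh := hall 1 le_rfl le_rfl
          rwa [Nat.cast_one] at hh
        constructor
        · rw [Nat.cast_one]
        · rw [Nat.cast_one]
          exact (P2 (μ + 1) hk1 P1.2).1
  intro t ht hall
  exact P1.1.trans ((chain t ht hall).2).symm
/-- Proposition 5.12 of the paper: if the `J′`- and `J^μ`-congruences hold for every
`μ ∈ M̃`, then there is a subset `J` agreeing with `J′` outside `J₀` such that the
irregular-weight congruences hold. -/
theorem stmt7 (p f : ℕ) (hp : p.Prime) (hodd : Odd p) (hf : 1 ≤ f)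
    (k : ZMod f → ℤ)
    (hk : ∀ i, 1 ≤ k i ∧ k i ≤ (p : ℤ))
    (hone : ∃ i, k i = 1) (hnotone : ∃ i, k i ≠ 1)
    (h21 : ∀ i, ¬(k i = 2 ∧ k (i + 1) = 1))
    (J' : Set (ZMod f)) (Jmu : ZMod f → Set (ZMod f))
    (hs : ∀ μ, (k μ ≠ 1 ∧ k (μ + 1) = 1) →
      Int.ModEq ((p : ℤ) ^ f - 1)
        (Sig p f (sW f (bp1 p f k) (zero2 f) J'))
        (Sig p f (sW f (bmu1 p f k μ) (bmu2 f μ) (Jmu μ))))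
    (ht : ∀ μ, (k μ ≠ 1 ∧ k (μ + 1) = 1) →
      Int.ModEq ((p : ℤ) ^ f - 1)
        (Sig p f (tW f (bp1 p f k) (zero2 f) J'))
        (Sig p f (tW f (bmu1 p f k μ) (bmu2 f μ) (Jmu μ)))) :
    ∃ J : Set (ZMod f),
      (∀ i, k i ≠ 1 → (i ∈ J ↔ i ∈ J')) ∧
      Int.ModEq ((p : ℤ) ^ f - 1)
        (Sig p f (sW f (b1 f k) (zero2 f) J)) (Sig p f (sW f (bp1 p f k) (zero2 f) J')) ∧
      Int.ModEq ((p : ℤ) ^ f - 1)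
        (Sig p f (tW f (b1 f k) (zero2 f) J)) (Sig p f (tW f (bp1 p f k) (zero2 f) J')) := by
  classical
  haveI : NeZero f := ⟨by omega⟩
  have hp3 : 3 ≤ (p : ℤ) := by
    have h2 := hp.two_le
    have hne : p ≠ 2 := by
      intro h
      have h3 := Nat.odd_iff.mp hodd
      omega
    exact_mod_cast (by omega : 3 ≤ p)
  have HM : ∀ i : ZMod f, k (i + 1) = 1 → (i ∈ J' ↔ i + 1 ∈ J') := by
    intro i hi1
    by_cases hki : k i = 1
    · obtain ⟨j, hj⟩ := hnotone
      have hij : i ≠ j := fun h => hj (h ▸ hki)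
      have hex : ∃ n : ℕ, 1 ≤ n ∧ k (i - (n : ZMod f)) ≠ 1 := by
        refine ⟨(i - j).val, ?_, ?_⟩
        · rcases Nat.eq_zero_or_pos (i - j).val with h0 | h1
          · exfalso
            have : i - j = 0 := (ZMod.val_eq_zero _).mp h0
            exact hij (by rwa [sub_eq_zero] at this)
          · exact h1
        · rw [ZMod.natCast_rightInverse (i - j), sub_sub_cancel]
          exact hj
      set t := Nat.find hex with hT
      obtain ⟨ht1, hμne⟩ := Nat.find_spec hex
      set μ := i - (t : ZMod f) with hμ
      have hμi : μ + (t : ZMod f) = i := by rw [hμ]; ring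
      have hmin : ∀ m : ℕ, 1 ≤ m → m < t → k (i - (m : ZMod f)) = 1 := by
        intro m h1 h2
        by_contra hmm
        exact Nat.find_min hex h2 ⟨h1, hmm⟩
      have hall : ∀ a : ℕ, 1 ≤ a → a ≤ t + 1 → k (μ + (a : ZMod f)) = 1 := by
        intro a ha1 ha2
        rcases le_or_gt a t with hle | hgt
        · have hcast : μ + (a : ZMod f) = i - ((t - a : ℕ) : ZMod f) := by
            rw [hμ]
            have hc2 : ((t : ℕ) : ZMod f) = ((t - a : ℕ) : ZMod f) + (a : ZMod f) := by
              rw [← Nat.cast_add]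
              congr 1
              omega
            rw [hc2]; ring
          rw [hcast]
          rcases Nat.eq_zero_or_pos (t - a) with h0 | hpos
          · rw [h0, Nat.cast_zero, sub_zero]; exact hki
          · exact hmin (t - a) hpos (by omega)
        · have ha : a = t + 1 := by omega
          subst ha
          have hcast : μ + ((t + 1 : ℕ) : ZMod f) = i + 1 := by
            rw [hμ]; push_cast; ring
          rw [hcast]; exact hi1
      have hμ1 : k μ ≠ 1 := hμne
      have hμ2 : k (μ + 1) = 1 := by
        have hh := hall 1 le_rfl (by omega)
        rwa [Nat.cast_one] at hh
      have hbs := block_step p f hp3 hf k hk h21 J' (Jmu μ) μ hμ1 hμ2 (hs μ ⟨hμ1, hμ2⟩)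
      have e1 := hbs t ht1 (fun a h1 h2 => hall a h1 (by omega))
      have e2 := hbs (t + 1) (by omega) hall
      rw [hμi] at e1
      have hμi1 : μ + ((t + 1 : ℕ) : ZMod f) = i + 1 := by
        rw [hμ]; push_cast; ring
      rw [hμi1] at e2
      exact e1.symm.trans e2
    · have hbs := block_step p f hp3 hf k hk h21 J' (Jmu i) i hki hi1 (hs i ⟨hki, hi1⟩)
      have hh := hbs 1 le_rfl (fun a h1 h2 => by
        have ha : a = 1 := by omega
        subst ha
        rwa [Nat.cast_one])
      rwa [Nat.cast_one] at hh
  refine ⟨J', fun i _ => Iff.rfl, ?_, ?_⟩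
  · exact Int.modEq_iff_dvd.mpr (Lmain p f k J' HM)
  · have d1 := Lmain p f k J' HM
    have d2 := Lmain p f k Set.univ (fun i _ => by simp)
    have ht1 : ∀ (c1 : ZMod f → ℤ) (S : Set (ZMod f)),
        Sig p f (tW f c1 (zero2 f) S)
          = Sig p f (sW f c1 (zero2 f) Set.univ) - Sig p f (sW f c1 (zero2 f) S) := by
      intro c1 S
      rw [← Sig_sub]
      congr 1
      funext i
      by_cases h : i ∈ S <;> simp [tW, sW, zero2, h]
    rw [Int.modEq_iff_dvd, ht1, ht1]
    have hre : (Sig p f (sW f (bp1 p f k) (zero2 f) Set.univ)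
          - Sig p f (sW f (bp1 p f k) (zero2 f) J'))
        - (Sig p f (sW f (b1 f k) (zero2 f) Set.univ)
          - Sig p f (sW f (b1 f k) (zero2 f) J'))
        = (Sig p f (sW f (bp1 p f k) (zero2 f) Set.univ)
            - Sig p f (sW f (b1 f k) (zero2 f) Set.univ))
          - (Sig p f (sW f (bp1 p f k) (zero2 f) J')
            - Sig p f (sW f (b1 f k) (zero2 f) J')) := by ring
    rw [hre]
    exact dvd_sub d2 d1
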